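/- arXiv:2204.12798 — 5 statements merged into one kernel-verified Lean document; each statement's English description precedes it below -/
import Mathlib

section
/- The DAFT kernel functions φ_m(n) = (1/√N)·exp(i2π(c₁n² + c₂m² + nm/N)) for m = 0,…,N−1 form an orthonormal basis of ℂ^N; that is, for all m₁, m₂ ∈ {0,…,N−1}, ∑_{n=0}^{N−1} φ_{m₁}(n)·conj(φ_{m₂}(n)) = δ(m₁ − m₂). -/
/-- The DAFT kernel functions
`φ_m(n) = (1/√N)·exp(i2π(c₁n² + c₂m² + nm/N))`, `m = 0,…,N−1`, form an
orthonormal family: `∑_{n<N} φ_{m₁}(n)·conj(φ_{m₂}(n)) = δ(m₁ − m₂)`. -/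
theorem daft_kernel_orthonormal (N : ℕ) (hN : 0 < N) (c₁ c₂ : ℝ)
    (φ : ℕ → ℕ → ℂ)
    (hφ : ∀ m n, φ m n = (1 / Real.sqrt N : ℝ) *
      Complex.exp (Complex.I * (2 * (Real.pi : ℂ)) *
        ((c₁ * (n : ℝ) ^ 2 + c₂ * (m : ℝ) ^ 2 + ((n : ℝ) * (m : ℝ)) / N : ℝ) : ℂ))) :
    ∀ m₁ ∈ Finset.range N, ∀ m₂ ∈ Finset.range N,
      ∑ n ∈ Finset.range N, φ m₁ n * (starRingEnd ℂ) (φ m₂ n) =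
        if m₁ = m₂ then 1 else 0 := by
  intro m₁ hm₁ m₂ hm₂
  rw [Finset.mem_range] at hm₁ hm₂
  have hNR : (N:ℝ) ≠ 0 := Nat.cast_ne_zero.mpr hN.ne'
  have hNC : (N:ℂ) ≠ 0 := Nat.cast_ne_zero.mpr hN.ne'
  have hsq : ((1 / Real.sqrt N : ℝ) : ℂ) * ((1 / Real.sqrt N : ℝ) : ℂ) = 1 / (N:ℂ) := by
    rw [← Complex.ofReal_mul]
    rw [div_mul_div_comm, one_mul, Real.mul_self_sqrt (Nat.cast_nonneg N)]
    push_cast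
    ring
  set z : ℂ := Complex.I * (2 * (Real.pi : ℂ)) with hz
  have hconj : ∀ r : ℝ, (starRingEnd ℂ) (Complex.exp (z * r)) = Complex.exp (-(z * r)) := by
    intro r
    rw [← Complex.exp_conj]
    congr 1
    rw [hz]
    simp only [map_mul, Complex.conj_I, map_ofNat, Complex.conj_ofReal]
    ring
  have key : ∀ n : ℕ, φ m₁ n * (starRingEnd ℂ) (φ m₂ n)
      = (1 / (N:ℂ)) * Complex.exp (z * ((c₂ * (m₁:ℝ)^2 - c₂*(m₂:ℝ)^2 : ℝ) : ℂ)) *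
        Complex.exp (z * ((((m₁:ℝ) - (m₂:ℝ))/N : ℝ) : ℂ)) ^ n := by
    intro n
    have hme : ∀ a b : ℂ, Complex.exp a * Complex.exp b = Complex.exp (a + b) :=
      fun a b => (Complex.exp_add a b).symm
    rw [hφ, hφ, map_mul, Complex.conj_ofReal, hconj, ← Complex.exp_nat_mul,
      mul_mul_mul_comm, hsq, hme, mul_assoc (1 / (N:ℂ)), hme]
    congr 1
    push_cast
    ring
  rw [Finset.sum_congr rfl (fun n _ => key n), ← Finset.mul_sum]
  by_cases h : m₁ = m₂
  · subst h
    simp only [sub_self, zero_div, Complex.ofReal_zero, mul_zero, Complex.exp_zero,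
      one_pow, Finset.sum_const, Finset.card_range, nsmul_eq_mul, mul_one, if_pos rfl]
    field_simp
    simp
  · rw [if_neg h]
    have hw1 : Complex.exp (z * ((((m₁:ℝ) - (m₂:ℝ))/N : ℝ) : ℂ)) ≠ 1 := by
      intro hw
      rw [Complex.exp_eq_one_iff] at hw
      obtain ⟨k, hk⟩ := hw
      have h2 : (2 * (Real.pi:ℂ) * Complex.I) ≠ 0 := by
        simp [Real.pi_ne_zero, Complex.I_ne_zero]
      have : ((((m₁:ℝ) - (m₂:ℝ))/N : ℝ) : ℂ) = (k:ℂ) := by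
        apply mul_left_cancel₀ h2
        rw [hz] at hk
        linear_combination hk
      have hr : (((m₁:ℝ) - (m₂:ℝ))/N : ℝ) = (k:ℝ) := by exact_mod_cast this
      have hd : ((m₁:ℝ) - (m₂:ℝ)) = k * N := by
        field_simp at hr; linarith
      have hkz : (m₁:ℤ) - m₂ = k * N := by exact_mod_cast hd
      rcases lt_trichotomy k 0 with hk0 | hk0 | hk0
      · nlinarith [hkz, (by exact_mod_cast hm₁ : (m₁:ℤ) < N), (by exact_mod_cast Int.ofNat_nonneg m₂ : (0:ℤ) ≤ m₂), (by exact_mod_cast hN : (0:ℤ) < N), Int.add_one_le_iff.mpr hk0]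
      · subst hk0
        simp at hkz
        omega
      · nlinarith [hkz, (by exact_mod_cast hm₂ : (m₂:ℤ) < N), (by exact_mod_cast Int.ofNat_nonneg m₁ : (0:ℤ) ≤ m₁), (by exact_mod_cast hN : (0:ℤ) < N), Int.add_one_le_iff.mpr hk0]
    rw [geom_sum_eq hw1]
    have hwN : Complex.exp (z * ((((m₁:ℝ) - (m₂:ℝ))/N : ℝ) : ℂ)) ^ N = 1 := by
      rw [← Complex.exp_nat_mul]
      have : (N:ℂ) * (z * ((((m₁:ℝ) - (m₂:ℝ))/N : ℝ) : ℂ))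
          = ((((m₁:ℤ) - (m₂:ℤ) : ℤ)) : ℂ) * (2 * (Real.pi:ℂ) * Complex.I) := by
        rw [hz]
        push_cast
        field_simp
      rw [this, Complex.exp_int_mul_two_pi_mul_I]
    rw [hwN]
    simp
end

section
/- If c₁ satisfies 2Nc₁ > 2α_max/(l_j − l_i) for all pairs of distinct integer delays l_i < l_j, and 2Nc₁ is an integer, then for any two paths i ≠ j with (l_i, α_i) ≠ (l_j, α_j), where |α_i|, |α_j| ≤ α_max, and with 2α_max l_max + 2α_max + l_max < N, the path locations loc_i = (α_i + 2Nc₁ l_i) mod N and loc_j = (α_j + 2Nc₁ l_j) mod N are distinct. -/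
/-! Two locations `α + (2α_max + 1) l` differ by at most `2α_max + (2α_max + 1) l_max < N`, so
equal residues modulo `N` mean equal integers. Since two values of `α ∈ [-α_max, α_max]` differ by
less than `2α_max + 1`, the pair `(l, α)` is then read off that integer as from a balanced
base-`(2α_max + 1)` expansion. -/

namespace Int

theorem eq_of_modEq_of_abs_sub_lt {n a b : ℤ} (h : a ≡ b [ZMOD n]) (hab : |a - b| < n) : a = b :=
  sub_eq_zero.mp (eq_zero_of_abs_lt_dvd h.symm.dvd hab)

theorem eq_and_eq_of_add_mul_eq_add_mul {A b a₁ a₂ l₁ l₂ : ℤ} (hb : 2 * A < b)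
    (ha₁ : |a₁| ≤ A) (ha₂ : |a₂| ≤ A) (h : a₁ + b * l₁ = a₂ + b * l₂) : a₁ = a₂ ∧ l₁ = l₂ := by
  have hdvd : b ∣ a₂ - a₁ := ⟨l₁ - l₂, by linear_combination -h⟩
  have hlt : |a₂ - a₁| < b := (abs_sub a₂ a₁).trans_lt (by linarith)
  have ha : a₁ = a₂ := (sub_eq_zero.mp (eq_zero_of_abs_lt_dvd hdvd hlt)).symm
  subst ha
  have hb0 : b ≠ 0 := by linarith [abs_nonneg a₁]
  exact ⟨rfl, mul_left_cancel₀ hb0 (add_left_cancel h)⟩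

theorem abs_add_mul_sub_add_mul_le {A L b a₁ a₂ l₁ l₂ : ℤ} (hb : 0 ≤ b)
    (ha₁ : |a₁| ≤ A) (ha₂ : |a₂| ≤ A) (hl₁ : l₁ ∈ Set.Icc 0 L) (hl₂ : l₂ ∈ Set.Icc 0 L) :
    |a₁ + b * l₁ - (a₂ + b * l₂)| ≤ 2 * A + b * L :=
  calc |a₁ + b * l₁ - (a₂ + b * l₂)| = |(a₁ - a₂) + b * (l₁ - l₂)| := by ring_nf
    _ ≤ |a₁ - a₂| + b * |l₁ - l₂| := (abs_add_le _ _).trans_eq (by rw [abs_mul, abs_of_nonneg hb])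
    _ ≤ 2 * A + b * L := by
      gcongr
      · linarith [abs_sub a₁ a₂]
      · exact abs_sub_le_of_nonneg_of_le hl₁.1 hl₁.2 hl₂.1 hl₂.2

end Int

/-- With `2Nc₁ = 2α_max + 1` and `2α_max l_max + 2α_max + l_max < N`,
the map `(l, α) ↦ (α + (2α_max+1)l) mod N` is injective on
`{0,…,l_max} × {−α_max,…,α_max}`; distinct paths get distinct locations. -/
theorem afdm_locations_distinct (N αmax lmax : ℕ)
    (hN : 2 * αmax * lmax + 2 * αmax + lmax < N)
    (l₁ l₂ : ℕ) (hl₁ : l₁ ≤ lmax) (hl₂ : l₂ ≤ lmax)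
    (α₁ α₂ : ℤ) (hα₁ : |α₁| ≤ (αmax : ℤ)) (hα₂ : |α₂| ≤ (αmax : ℤ))
    (hne : ((l₁ : ℤ), α₁) ≠ ((l₂ : ℤ), α₂)) :
    (α₁ + (2 * (αmax : ℤ) + 1) * (l₁ : ℤ)) % (N : ℤ) ≠
      (α₂ + (2 * (αmax : ℤ) + 1) * (l₂ : ℤ)) % (N : ℤ) := by
  intro hmod
  have hspread := Int.abs_add_mul_sub_add_mul_le (b := 2 * (αmax : ℤ) + 1) (by positivity) hα₁ hα₂
    (l₁ := l₁) (l₂ := l₂) (L := lmax) ⟨by positivity, by exact_mod_cast hl₁⟩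
    ⟨by positivity, by exact_mod_cast hl₂⟩
  have hloc := Int.eq_of_modEq_of_abs_sub_lt hmod (by zify at hN; linarith)
  obtain ⟨hα, hl⟩ := Int.eq_and_eq_of_add_mul_eq_add_mul (by linarith) hα₁ hα₂ hloc
  exact hne (Prod.ext hl hα)
end

section
/- Let v be an eigenvector of −S⁻¹(R−S) with eigenvalue λ, where S = (γ⁻¹+d)I + L and R = L + Lᴴ + (d+γ⁻¹)I is positive definite, vᴴv = β > 0. Writing a = Re(vᴴLv) and b = Im(vᴴLv), positive-definiteness gives a > −β(d+γ⁻¹)/2, and λ = −(a − ib)/(β(γ⁻¹+d) + a + ib), whence |λ| < 1. -/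
open Matrix ComplexOrder

/-- For an eigenpair `(λ, v)` of `−S⁻¹(R−S)` with
`S = (γ⁻¹+d)I + L`, `R = L + Lᴴ + (d+γ⁻¹)I` positive definite, `β = vᴴv`,
`a = Re(vᴴLv)`, `b = Im(vᴴLv)`: positive definiteness gives `a > −β(d+γ⁻¹)/2`,
`λ = −(a − ib)/(β(γ⁻¹+d) + a + ib)`, whence `|λ| < 1`. -/
theorem gauss_seidel_eigenvalue_formula (n : ℕ)
    (L R S : Matrix (Fin n) (Fin n) ℂ) (d γ : ℝ) (hd : 0 < d) (hγ : 0 < γ)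
    (hLlow : ∀ i j : Fin n, i ≤ j → L i j = 0)
    (hR : R = L + Lᴴ + (((d + γ⁻¹ : ℝ)) : ℂ) • 1)
    (hS : S = (((γ⁻¹ + d : ℝ)) : ℂ) • 1 + L)
    (hRpd : R.PosDef)
    (v : Fin n → ℂ) (hv : v ≠ 0) (lam : ℂ)
    (heig : (-(S⁻¹ * (R - S))).mulVec v = lam • v)
    (β a b : ℝ)
    (hβ : (β : ℂ) = dotProduct (star v) v)
    (ha : a = (dotProduct (star v) (L.mulVec v)).re)
    (hb : b = (dotProduct (star v) (L.mulVec v)).im) :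
    a > -(β * (d + γ⁻¹)) / 2 ∧
    lam = -((a : ℂ) - (b : ℂ) * Complex.I) /
        (((β * (γ⁻¹ + d) : ℝ) : ℂ) + (a : ℂ) + (b : ℂ) * Complex.I) ∧
    ‖lam‖ < 1 := by
  have ht : (0:ℝ) < γ⁻¹ + d := by positivity
  set c : ℂ := dotProduct (star v) (L.mulVec v) with hc
  -- c = a + b I
  have hcab : c = (a : ℂ) + (b : ℂ) * Complex.I := by
    rw [ha, hb, Complex.re_add_im]
  have hconjc : (starRingEnd ℂ) c = (a : ℂ) - (b : ℂ) * Complex.I := by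
    rw [hcab]; simp [Complex.conj_I, sub_eq_add_neg, mul_comm]
  -- β > 0
  have hβpos : 0 < β := by
    have h1 : (1 : Matrix (Fin n) (Fin n) ℂ).PosDef := Matrix.PosDef.one
    have := h1.dotProduct_mulVec_pos hv
    rw [Matrix.one_mulVec, ← hβ] at this
    exact Complex.zero_lt_real.mp this
  -- conj trick
  have hconj : dotProduct (star v) (Lᴴ.mulVec v) = (starRingEnd ℂ) c := by
    rw [hc, dotProduct_mulVec, ← Matrix.star_mulVec]
    simp only [dotProduct, map_sum, _root_.map_mul, Pi.star_apply, Complex.conj_conj,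
      RCLike.star_def]
    exact Finset.sum_congr rfl fun i _ => mul_comm _ _
  -- positive definiteness : 2a + (d+γ⁻¹)β > 0
  have hRv : dotProduct (star v) (R.mulVec v)
      = ((2*a + (d+γ⁻¹)*β : ℝ) : ℂ) := by
    rw [hR, Matrix.add_mulVec, Matrix.add_mulVec, dotProduct_add,
      dotProduct_add, Matrix.smul_mulVec, Matrix.one_mulVec,
      dotProduct_smul, ← hc, hconj, hconjc, ← hβ, hcab, smul_eq_mul]
    push_cast
    ring
  have hpos : (0:ℝ) < 2*a + (d+γ⁻¹)*β := by
    have := hRpd.dotProduct_mulVec_pos hv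
    rw [hRv] at this
    exact Complex.zero_lt_real.mp this
  have hagt : a > -(β * (d + γ⁻¹)) / 2 := by linarith
  refine ⟨hagt, ?_⟩
  -- invertibility of S
  have hSdiag : ∀ i, S i i = ((γ⁻¹ + d : ℝ) : ℂ) := by
    intro i
    rw [hS]
    simp [hLlow i i le_rfl]
  have hdet : IsUnit S.det := by
    have hlow : S.BlockTriangular OrderDual.toDual := by
      intro i j hij
      rw [hS]
      simp only [Matrix.add_apply, Matrix.smul_apply, Matrix.one_apply]
      rw [if_neg (by exact fun h => absurd h (ne_of_lt hij).symm ),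
        hLlow i j (le_of_lt hij)]
      simp
    rw [Matrix.det_of_lowerTriangular S hlow]
    refine isUnit_iff_ne_zero.mpr (Finset.prod_ne_zero_iff.mpr fun i _ => ?_)
    rw [hSdiag i]
    exact_mod_cast ne_of_gt ht
  have hSS : S * S⁻¹ = 1 := Matrix.mul_nonsing_inv S hdet
  -- R - S = Lᴴ
  have hRS : R - S = Lᴴ := by
    rw [hR, hS]
    have : ((d + γ⁻¹ : ℝ) : ℂ) = ((γ⁻¹ + d : ℝ) : ℂ) := by push_cast; ring
    rw [this]
    abel
  -- key scalar equation
  have hmv : -(Lᴴ.mulVec v) = lam • S.mulVec v := by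
    have h2 := congrArg (S.mulVec) heig
    rw [Matrix.mulVec_mulVec, Matrix.mulVec_smul] at h2
    rw [← h2, mul_neg, ← mul_assoc, hSS, one_mul, hRS]
    simp [Matrix.neg_mulVec]
  have hSv : dotProduct (star v) (S.mulVec v)
      = ((β * (γ⁻¹ + d) : ℝ) : ℂ) + c := by
    rw [hS, Matrix.add_mulVec, dotProduct_add, Matrix.smul_mulVec,
      Matrix.one_mulVec, dotProduct_smul, ← hβ, ← hc, smul_eq_mul]
    push_cast
    ring
  have key : -(starRingEnd ℂ) c
      = lam * (((β * (γ⁻¹ + d) : ℝ) : ℂ) + c) := by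
    have := congrArg (dotProduct (star v)) hmv
    rwa [dotProduct_neg, hconj, dotProduct_smul, hSv, smul_eq_mul] at this
  -- denominator
  set D : ℂ := ((β * (γ⁻¹ + d) : ℝ) : ℂ) + (a : ℂ) + (b : ℂ) * Complex.I with hD
  have hDc : ((β * (γ⁻¹ + d) : ℝ) : ℂ) + c = D := by rw [hcab, hD]; ring
  have hDre : D.re = β * (γ⁻¹ + d) + a := by simp [hD]
  have hDim : D.im = b := by simp [hD]
  have hDrepos : 0 < β * (γ⁻¹ + d) + a := by nlinarith
  have hDne : D ≠ 0 := by
    intro h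
    rw [h] at hDre
    simp at hDre
    linarith
  have hlam : lam = -((a : ℂ) - (b : ℂ) * Complex.I) / D := by
    rw [eq_div_iff hDne]
    rw [← hconjc, ← hDc, ← key]
  refine ⟨hlam, ?_⟩
  rw [hlam, norm_div, norm_neg]
  rw [div_lt_one (norm_pos_iff.mpr hDne)]
  rw [Complex.norm_def, Complex.norm_def]
  apply Real.sqrt_lt_sqrt (Complex.normSq_nonneg _)
  simp only [Complex.normSq_apply, hDre, hDim, Complex.sub_re, Complex.sub_im,
    Complex.ofReal_re, Complex.ofReal_im, Complex.mul_re, Complex.mul_im,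
    Complex.I_re, Complex.I_im]
  ring_nf
  nlinarith [mul_pos hβpos ht]
end

section
/- For integer Doppler shifts with 2Nc₁ an integer, the matrix H_i = A Δ_{f_i} Π^{l_i} Aᴴ has entries H_i[p,q] = exp(i(2π/N)(Nc₁l_i² − q l_i + Nc₂(q² − p²))) if q ≡ p + loc_i (mod N) and 0 otherwise, where loc_i = (α_i + 2Nc₁l_i) mod N and f_i = α_i/N; in particular each row and each column of H_i has exactly one nonzero entry, and that entry has modulus 1. -/
open Matrix
open Fin.NatCast
open Fin.CommRing

noncomputable def Ee (N : ℕ) (t : ℤ) : ℂ := Complex.exp (Complex.I * Real.pi * t / N)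

lemma Ee_sum (N : ℕ) [NeZero N] (d : ℤ) :
    ∑ n : Fin N, Ee N (2 * (n : ℤ) * d) = if (N : ℤ) ∣ d then (N : ℂ) else 0 := by
  have hN : (N : ℂ) ≠ 0 := Nat.cast_ne_zero.mpr (NeZero.ne N)
  set ζ : ℂ := Complex.exp (2 * Real.pi * Complex.I * d / N) with hζ
  have hterm : ∀ n : Fin N, Ee N (2 * (n : ℤ) * d) = ζ ^ (n : ℕ) := by
    intro n
    rw [hζ, ← Complex.exp_nat_mul, Ee]
    congr 1
    push_cast
    ring
  simp only [hterm]
  rw [Fin.sum_univ_eq_sum_range (fun i => ζ ^ i)]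
  by_cases hdvd : (N : ℤ) ∣ d
  · obtain ⟨u, hu⟩ := hdvd
    have : ζ = 1 := by
      rw [hζ, hu]
      rw [show (2 * ↑Real.pi * Complex.I * ↑((N:ℤ) * u) / ↑N : ℂ) = (u : ℂ) * (2 * ↑Real.pi * Complex.I) by
        push_cast; field_simp]
      exact Complex.exp_int_mul_two_pi_mul_I u
    rw [if_pos ⟨u, hu⟩]
    simp [this]
  · have hζN : ζ ^ N = 1 := by
      rw [hζ, ← Complex.exp_nat_mul]
      rw [show (N : ℂ) * (2 * ↑Real.pi * Complex.I * ↑d / ↑N) = (d : ℂ) * (2 * ↑Real.pi * Complex.I) by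
        field_simp]
      exact Complex.exp_int_mul_two_pi_mul_I d
    have hζ1 : ζ ≠ 1 := by
      intro h1
      rw [hζ, Complex.exp_eq_one_iff] at h1
      obtain ⟨n, hn⟩ := h1
      apply hdvd
      refine ⟨n, ?_⟩
      have goal' : (d : ℂ) = ((N * n : ℤ) : ℂ) → d = N * n := fun h => by exact_mod_cast h
      apply goal'
      push_cast
      have h2πI : (2 * (Real.pi:ℂ) * Complex.I) ≠ 0 := by
        simp [Real.pi_ne_zero, Complex.I_ne_zero]
      have : (d : ℂ) = (n : ℂ) * N := by
        field_simp at hn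
        have := mul_right_cancel₀ h2πI (by linear_combination (2 * (Real.pi:ℂ) * Complex.I) * hn : (d:ℂ) * (2 * (Real.pi:ℂ) * Complex.I) = ((n:ℂ) * N) * (2 * (Real.pi:ℂ) * Complex.I))
        exact this
      rw [this]; ring
    rw [geom_sum_eq hζ1, hζN]
    simp [hdvd]

lemma exp_add_int_mul (z : ℂ) (j : ℤ) :
    Complex.exp (z + (j : ℂ) * (2 * Real.pi * Complex.I)) = Complex.exp z := by
  rw [Complex.exp_add, Complex.exp_int_mul_two_pi_mul_I, mul_one]

/-- For integer Doppler shifts with `2Nc₁ = k ∈ ℤ`, the matrix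
`H_i = A Δ_{α/N} Π^l Aᴴ` has entries
`H_i[p,q] = exp(i(2π/N)(Nc₁l² − ql + Nc₂(q² − p²)))` when `q ≡ p + α + kl (mod N)`
and `0` otherwise; each row has exactly one nonzero entry, of modulus `1`. -/
theorem afdm_integer_doppler_channel_entries (N : ℕ) [NeZero N] (hNeven : Even N)
    (c₁ c₂ : ℝ) (k : ℤ) (hk : (k : ℝ) = 2 * (N : ℝ) * c₁)
    (l : ℕ) (hl : l < N) (α : ℤ)
    (F Λ₁ Λ₂ A Pm Δ Hi : Matrix (Fin N) (Fin N) ℂ)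
    (hF : ∀ m n : Fin N, F m n =
      Complex.exp (-(Complex.I * 2 * (Real.pi : ℂ) * ((m : ℕ) : ℂ) * ((n : ℕ) : ℂ) / N)) /
        (Real.sqrt N : ℂ))
    (hΛ₁ : Λ₁ = Matrix.diagonal fun n : Fin N =>
      Complex.exp (-(Complex.I * 2 * (Real.pi : ℂ) * (c₁ : ℂ) * ((n : ℕ) : ℂ) ^ 2)))
    (hΛ₂ : Λ₂ = Matrix.diagonal fun n : Fin N =>
      Complex.exp (-(Complex.I * 2 * (Real.pi : ℂ) * (c₂ : ℂ) * ((n : ℕ) : ℂ) ^ 2)))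
    (hA : A = Λ₂ * F * Λ₁)
    (hPm : ∀ i j : Fin N, Pm i j = if i = j + 1 then 1 else 0)
    (hΔ : Δ = Matrix.diagonal fun n : Fin N =>
      Complex.exp (-(Complex.I * 2 * (Real.pi : ℂ) * (((α : ℝ) / N : ℝ) : ℂ) * ((n : ℕ) : ℂ))))
    (hHi : Hi = A * Δ * Pm ^ l * Aᴴ) :
    (∀ p q : Fin N, Hi p q =
      if ((q : ℤ) - (p : ℤ) - α - k * (l : ℤ)) % (N : ℤ) = 0 then
        Complex.exp (Complex.I * (2 * (Real.pi : ℂ) / N) *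
          ((N : ℂ) * (c₁ : ℂ) * (l : ℂ) ^ 2 - ((q : ℕ) : ℂ) * (l : ℂ) +
            (N : ℂ) * (c₂ : ℂ) * (((q : ℕ) : ℂ) ^ 2 - ((p : ℕ) : ℂ) ^ 2)))
      else 0) ∧
    (∀ p : Fin N, ∃! q : Fin N, Hi p q ≠ 0) ∧
    (∀ p q : Fin N, Hi p q ≠ 0 → ‖Hi p q‖ = 1) := by
  have hNn : N ≠ 0 := NeZero.ne N
  have hN0 : (N : ℂ) ≠ 0 := Nat.cast_ne_zero.mpr hNn
  have hNR : (N : ℝ) ≠ 0 := Nat.cast_ne_zero.mpr hNn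
  have hNZ : (N : ℤ) ≠ 0 := Int.natCast_ne_zero.mpr hNn
  obtain ⟨h, hh⟩ := hNeven
  have hNC : (N : ℂ) = 2 * (h : ℂ) := by rw [hh]; push_cast; ring
  have hh0 : (h : ℂ) ≠ 0 := by
    intro hz
    apply hN0
    rw [hNC, hz, mul_zero]
  have hc₁C : (c₁ : ℂ) = (k : ℂ) / (2 * N) := by
    have : c₁ = (k : ℝ) / (2 * N) := by field_simp [hk]; linarith
    rw [this]; push_cast; ring
  have hsqrt : (Real.sqrt N : ℂ) * (Real.sqrt N : ℂ) = (N : ℂ) := by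
    rw [← Complex.ofReal_mul, Real.mul_self_sqrt (Nat.cast_nonneg N)]
    norm_cast
  have hs0 : (Real.sqrt N : ℂ) ≠ 0 := by
    intro hz
    rw [hz, mul_zero] at hsqrt
    exact hN0 hsqrt.symm
  -- closed form of A entries
  have hAe : ∀ i j : Fin N, A i j = Complex.exp
      (-(Complex.I * 2 * (Real.pi : ℂ) * (c₂ : ℂ) * ((i : ℕ) : ℂ) ^ 2) +
       -(Complex.I * 2 * (Real.pi : ℂ) * ((i : ℕ) : ℂ) * ((j : ℕ) : ℂ) / N) +
       -(Complex.I * 2 * (Real.pi : ℂ) * (c₁ : ℂ) * ((j : ℕ) : ℂ) ^ 2)) /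
      (Real.sqrt N : ℂ) := by
    intro i j
    rw [hA, hΛ₁, hΛ₂, Matrix.mul_diagonal, Matrix.diagonal_mul, hF]
    rw [Complex.exp_add, Complex.exp_add]
    ring
  have hAconj : ∀ i j : Fin N, (starRingEnd ℂ) (A i j) = Complex.exp
      (Complex.I * 2 * (Real.pi : ℂ) * (c₂ : ℂ) * ((i : ℕ) : ℂ) ^ 2 +
       Complex.I * 2 * (Real.pi : ℂ) * ((i : ℕ) : ℂ) * ((j : ℕ) : ℂ) / N +
       Complex.I * 2 * (Real.pi : ℂ) * (c₁ : ℂ) * ((j : ℕ) : ℂ) ^ 2) /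
      (Real.sqrt N : ℂ) := by
    intro i j
    rw [hAe, map_div₀, ← Complex.exp_conj]
    congr 1
    · congr 1
      simp only [map_add, map_neg, _root_.map_mul, map_pow, map_div₀, Complex.conj_I,
        Complex.conj_ofReal, Complex.conj_natCast, map_ofNat]
      push_cast
      ring
    · rw [Complex.conj_ofReal]
  -- powers of the shift matrix
  have hPmPow : ∀ t : ℕ, ∀ i j : Fin N, (Pm ^ t) i j =
      if i = j + (t : Fin N) then 1 else 0 := by
    intro t
    induction t with
    | zero =>
      intro i j
      simp [Matrix.one_apply]
    | succ t ih =>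
      intro i j
      rw [pow_succ, Matrix.mul_apply]
      have hterm : ∀ n : Fin N, (Pm ^ t) i n * Pm n j =
          if n = j + 1 then (if i = n + (t : Fin N) then (1:ℂ) else 0) else 0 := by
        intro n
        rw [ih, hPm]
        split <;> simp
      simp only [hterm]
      rw [Finset.sum_ite_eq' Finset.univ (j + 1)
        (fun n => if i = n + (t : Fin N) then (1:ℂ) else 0)]
      rw [if_pos (Finset.mem_univ _)]
      have harr : j + 1 + (t : Fin N) = j + ((t + 1 : ℕ) : Fin N) := by
        push_cast
        ring
      rw [harr]
  -- main entry formula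
  have hent : ∀ p q : Fin N, Hi p q =
      if ((q : ℤ) - (p : ℤ) - α - k * (l : ℤ)) % (N : ℤ) = 0 then
        Complex.exp (Complex.I * (2 * (Real.pi : ℂ) / N) *
          ((N : ℂ) * (c₁ : ℂ) * (l : ℂ) ^ 2 - ((q : ℕ) : ℂ) * (l : ℂ) +
            (N : ℂ) * (c₂ : ℂ) * (((q : ℕ) : ℂ) ^ 2 - ((p : ℕ) : ℂ) ^ 2)))
      else 0 := by
    intro p q
    set d : ℤ := (q : ℤ) - (p : ℤ) - α - k * (l : ℤ) with hd
    set C : ℤ := -(2 * (p : ℤ) * l) - k * (l : ℤ) ^ 2 - 2 * α * l with hC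
    have step1 : Hi p q = ∑ n : Fin N,
        (A * Δ) p (n + (l : Fin N)) * (starRingEnd ℂ) (A q n) := by
      rw [hHi, Matrix.mul_apply]
      apply Finset.sum_congr rfl
      intro n _
      rw [Matrix.conjTranspose_apply, Matrix.mul_apply]
      have hone : ∀ m : Fin N, (A * Δ) p m * (Pm ^ l) m n =
          if m = n + (l : Fin N) then (A * Δ) p m else 0 := by
        intro m
        rw [hPmPow]
        split <;> simp
      simp only [hone]
      rw [Finset.sum_ite_eq' Finset.univ (n + (l : Fin N)) (fun m => (A * Δ) p m),
        if_pos (Finset.mem_univ _)]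
      rfl
    set W : ℂ := 1 / (N : ℂ) * Complex.exp (Complex.I * 2 * (Real.pi : ℂ) * (c₂ : ℂ) *
        (((q : ℕ) : ℂ) ^ 2 - ((p : ℕ) : ℂ) ^ 2)) * Ee N C with hW
    have comb : ∀ a b c : ℂ, Complex.exp a / (Real.sqrt N : ℂ) * Complex.exp b *
        (Complex.exp c / (Real.sqrt N : ℂ)) = Complex.exp (a + b + c) / N := by
      intro a b c
      rw [Complex.exp_add, Complex.exp_add, ← hsqrt]
      field_simp
    have comb2 : ∀ a b c : ℂ, 1 / (N : ℂ) * Complex.exp a * Complex.exp b * Complex.exp c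
        = Complex.exp (a + b + c) / N := by
      intro a b c
      rw [Complex.exp_add, Complex.exp_add]
      ring
    have point : ∀ n : Fin N, (A * Δ) p (n + (l : Fin N)) * (starRingEnd ℂ) (A q n)
        = W * Ee N (2 * (n : ℤ) * d) := by
      intro n
      have hmval : ((n + (l : Fin N) : Fin N) : ℕ) = ((n : ℕ) + l) % N := by
        rw [Fin.val_add, Fin.val_natCast, Nat.mod_eq_of_lt hl]
      set tZ : ℤ := (((n : ℕ) : ℤ) + (l : ℤ)) / N with htZ
      have hmv : (((n + (l : Fin N) : Fin N) : ℕ) : ℤ)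
          = ((n : ℕ) : ℤ) + (l : ℤ) - (N : ℤ) * tZ := by
        rw [hmval]
        push_cast
        rw [Int.emod_def, htZ]
      have hmvC : (((n + (l : Fin N) : Fin N) : ℕ) : ℂ)
          = ((n : ℕ) : ℂ) + (l : ℂ) - (N : ℂ) * (tZ : ℂ) := by
        exact_mod_cast hmv
      set J : ℤ := (p : ℤ) * tZ + α * tZ + k * tZ * (((n : ℕ) : ℤ) + l)
          - k * (h : ℤ) * tZ ^ 2 with hJ
      rw [hΔ, Matrix.mul_diagonal, hAe, hAconj, comb, hW]
      simp only [Ee]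
      rw [comb2]
      congr 1
      conv_rhs => rw [← exp_add_int_mul _ J]
      congr 1
      rw [hmvC, hc₁C, hC, hd, hJ]
      push_cast
      rw [hNC]
      have hNinv : (2 * (h : ℂ)) * (2 * (h : ℂ))⁻¹ = 1 :=
        mul_inv_cancel₀ (by rw [← hNC]; exact hN0)
      linear_combination (Complex.I * (Real.pi : ℂ) *
        (2 * ((p : ℕ) : ℂ) * (tZ : ℂ) + 2 * (α : ℂ) * (tZ : ℂ) +
          2 * (k : ℂ) * (tZ : ℂ) * (((n : ℕ) : ℂ) + (l : ℂ)) -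
          2 * (k : ℂ) * (h : ℂ) * (tZ : ℂ) ^ 2)) * hNinv
    rw [step1]
    simp only [point]
    rw [← Finset.mul_sum, Ee_sum N d]
    by_cases hdvd : (N : ℤ) ∣ d
    · rw [if_pos hdvd, if_pos (Int.dvd_iff_emod_eq_zero.mp hdvd)]
      obtain ⟨u, hu⟩ := hdvd
      have hαZ : α = (q : ℤ) - (p : ℤ) - k * l - N * u := by
        rw [hd] at hu
        linarith
      have hαC : (α : ℂ) = ((q : ℕ) : ℂ) - ((p : ℕ) : ℂ) - (k : ℂ) * l - (N : ℂ) * u := by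
        exact_mod_cast hαZ
      have comb3 : ∀ a b : ℂ, 1 / (N : ℂ) * Complex.exp a * Complex.exp b * N
          = Complex.exp (a + b) := by
        intro a b
        rw [Complex.exp_add]
        field_simp
      rw [hW]
      simp only [Ee]
      rw [comb3]
      conv_rhs => rw [← exp_add_int_mul _ ((l : ℤ) * u)]
      congr 1
      rw [hC, hc₁C]
      push_cast
      rw [hαC]
      have hNinv : (N : ℂ) * (N : ℂ)⁻¹ = 1 := mul_inv_cancel₀ hN0
      linear_combination (Complex.I * (Real.pi : ℂ) * (2 * (l : ℂ) * (u : ℂ)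
        - 2 * (c₂ : ℂ) * (((q : ℕ) : ℂ) ^ 2 - ((p : ℕ) : ℂ) ^ 2)
        - (k : ℂ) * (l : ℂ) ^ 2 * ((N : ℂ))⁻¹)) * hNinv
    · rw [if_neg hdvd, if_neg (fun hc => hdvd (Int.dvd_iff_emod_eq_zero.mpr hc)),
        mul_zero]
  refine ⟨hent, ?_, ?_⟩
  · -- unique nonzero entry in each row
    intro p
    set x : ℤ := (p : ℤ) + α + k * (l : ℤ) with hx
    have h1 : 0 ≤ x % N := Int.emod_nonneg _ hNZ
    have h2 : x % N < N := Int.emod_lt_of_pos _ (by omega)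
    have hq0lt : (x % N).toNat < N := by omega
    have hcond : ((((x % N).toNat : ℕ) : ℤ) - (p : ℤ) - α - k * (l : ℤ)) % (N : ℤ) = 0 := by
      rw [Int.toNat_of_nonneg h1]
      have hrw : x % N - (p : ℤ) - α - k * (l : ℤ) = -((N : ℤ) * (x / N)) := by
        rw [Int.emod_def, hx]
        ring
      rw [hrw]
      exact Int.dvd_iff_emod_eq_zero.mp (dvd_neg.mpr (dvd_mul_right _ _))
    refine ⟨⟨(x % N).toNat, hq0lt⟩, ?_, ?_⟩
    · show Hi p ⟨(x % N).toNat, hq0lt⟩ ≠ 0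
      rw [hent]
      simp only [Fin.val_mk]
      rw [if_pos hcond]
      exact Complex.exp_ne_zero _
    · intro q hq
      rw [hent] at hq
      have hcondq : (((q : ℕ) : ℤ) - (p : ℤ) - α - k * (l : ℤ)) % (N : ℤ) = 0 := by
        by_contra hcc
        rw [if_neg hcc] at hq
        exact hq rfl
      have hd1 : (N : ℤ) ∣ ((q : ℕ) : ℤ) - x := by
        have hdd := Int.dvd_iff_emod_eq_zero.mpr hcondq
        have heq : ((q : ℕ) : ℤ) - (p : ℤ) - α - k * (l : ℤ) = ((q : ℕ) : ℤ) - x := by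
          rw [hx]; ring
        rwa [heq] at hdd
      have hd2 : (N : ℤ) ∣ ((q : ℕ) : ℤ) - x % N := by
        have heq : ((q : ℕ) : ℤ) - x % N = (((q : ℕ) : ℤ) - x) + N * (x / N) := by
          rw [Int.emod_def]; ring
        rw [heq]
        exact dvd_add hd1 (dvd_mul_right _ _)
      have hqlt : ((q : ℕ) : ℤ) < N := by exact_mod_cast q.isLt
      have hqge : (0 : ℤ) ≤ ((q : ℕ) : ℤ) := Int.natCast_nonneg _
      have hzero : ((q : ℕ) : ℤ) - x % N = 0 :=
        Int.eq_zero_of_abs_lt_dvd hd2 (by rw [abs_lt]; omega)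
      apply Fin.ext
      simp only [Fin.val_mk]
      omega
  · -- unit modulus
    intro p q hne
    rw [hent] at hne ⊢
    by_cases hc : ((q : ℤ) - (p : ℤ) - α - k * (l : ℤ)) % (N : ℤ) = 0
    · rw [if_pos hc]
      rw [show Complex.I * (2 * (Real.pi : ℂ) / N) *
          ((N : ℂ) * (c₁ : ℂ) * (l : ℂ) ^ 2 - ((q : ℕ) : ℂ) * (l : ℂ) +
            (N : ℂ) * (c₂ : ℂ) * (((q : ℕ) : ℂ) ^ 2 - ((p : ℕ) : ℂ) ^ 2))
          = ((2 * Real.pi / N * ((N : ℝ) * c₁ * (l : ℝ) ^ 2 - ((q : ℕ) : ℝ) * (l : ℝ) +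
            (N : ℝ) * c₂ * (((q : ℕ) : ℝ) ^ 2 - ((p : ℕ) : ℝ) ^ 2)) : ℝ) : ℂ) * Complex.I
          from by push_cast; ring]
      exact Complex.norm_exp_ofReal_mul_I _
    · rw [if_neg hc] at hne
      exact absurd rfl hne
end

section
/- If for some pair of paths i ≠ j the locations coincide, loc_i = loc_j, then there exists a nonzero error vector δ (with a single nonzero entry) such that the N×2 matrix [H_i δ | H_j δ] has rank at most 1; hence the matrix Φ(δ) = [H_1δ | … | H_Pδ] cannot have rank P for all δ, and full diversity P cannot be achieved. -/
open Matrix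

/-- If two paths `i ≠ j` have coinciding locations `loc_i = loc_j`
(each `H_k` has its row-`p` nonzero entry only in column `(p + loc_k) mod N`),
then there is a nonzero error vector `δ` with a single nonzero entry such that
the `N×2` matrix `[H_iδ | H_jδ]` has rank at most `1` — so full diversity fails. -/
theorem coinciding_locations_rank_deficient (N P : ℕ) [NeZero N]
    (H : Fin P → Matrix (Fin N) (Fin N) ℂ)
    (loc : Fin P → Fin N)
    (hstruct : ∀ (k : Fin P) (p q : Fin N), q ≠ p + loc k → H k p q = 0)
    (i j : Fin P) (hij : i ≠ j) (hloc : loc i = loc j) :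
    ∃ δ : Fin N → ℂ, δ ≠ 0 ∧ (∃ s : Fin N, ∀ t : Fin N, t ≠ s → δ t = 0) ∧
      Matrix.rank (Matrix.of fun (p : Fin N) (c : Fin 2) =>
        if c = 0 then (H i).mulVec δ p else (H j).mulVec δ p) ≤ 1 := by
  refine ⟨Pi.single (loc i) 1, ?_, ⟨loc i, fun t ht => Pi.single_eq_of_ne ht 1⟩, ?_⟩
  · intro h
    have := congrFun h (loc i)
    simp [Pi.single_eq_same] at this
  · set M : Matrix (Fin N) (Fin 2) ℂ := Matrix.of fun (p : Fin N) (c : Fin 2) =>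
      if c = 0 then (H i).mulVec (Pi.single (loc i) 1) p
      else (H j).mulVec (Pi.single (loc i) 1) p with hM
    have hzero : ∀ p : Fin N, p ≠ 0 → ∀ c, M p c = 0 := by
      intro p hp c
      have h1 : loc i ≠ p + loc i := by
        intro h; apply hp
        exact add_right_cancel (b := loc i) (h.symm.trans (zero_add (loc i)).symm)
      have h2 : loc i ≠ p + loc j := hloc ▸ h1
      simp only [hM, Matrix.of_apply, Matrix.mulVec_single, mul_one, MulOpposite.op_one, one_smul, Matrix.col_apply]
      split
      · exact hstruct i p (loc i) h1
      · exact hstruct j p (loc i) h2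
    have hfact : M = (Matrix.of fun (p : Fin N) (_ : Fin 1) =>
        if p = 0 then (1:ℂ) else 0) * (Matrix.of fun (_ : Fin 1) (c : Fin 2) => M 0 c) := by
      ext p c
      simp only [Matrix.mul_apply, Fin.sum_univ_one, Matrix.of_apply]
      by_cases hp : p = 0
      · simp [hp]
      · simp [hp, hzero p hp c]
    calc M.rank ≤ (Matrix.of fun (_ : Fin 1) (c : Fin 2) => M 0 c).rank := by
          conv_lhs => rw [hfact]
          exact Matrix.rank_mul_le_right _ _
      _ ≤ Fintype.card (Fin 1) := Matrix.rank_le_card_height _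
      _ = 1 := by simp
end
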